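/- arXiv:2207.12686 — 7 statements merged into one kernel-verified Lean document; each statement's English description precedes it below -/
import Mathlib

section
/- For the 2×2 system with A = diag(d_1, d_2), d_1 ≠ d_2, and G = [[a,b],[c,d]], the condition that for every ξ ∈ ℝ all eigenvalues of -iξA + G have negative real part bounded away from 0 uniformly in ξ is equivalent to: a < 0, d < 0, and ad - bc > 0. -/
private lemma stmt2_solve (p q e : ℝ) (hp : p ≠ 0) (hq : q ≠ 0) (h : 0 ≤ p*(e - p*q)/q) :
    ∃ u v : ℝ, p*q - u*v = e ∧ p*v + q*u = 0 := by
  set u := Real.sqrt (p*(e - p*q)/q) with hu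
  refine ⟨u, -q*u/p, ?_, ?_⟩
  · have hs : u^2 = p*(e - p*q)/q := Real.sq_sqrt h
    field_simp at hs ⊢
    nlinarith [hs]
  · field_simp; ring

private lemma stmt2_realize (d₁ d₂ u v : ℝ) (hd : d₁ ≠ d₂) :
    ∃ ξ y : ℝ, y + ξ*d₁ = u ∧ y + ξ*d₂ = v := by
  have h : d₁ - d₂ ≠ 0 := sub_ne_zero.mpr hd
  refine ⟨(u-v)/(d₁-d₂), u - (u-v)/(d₁-d₂)*d₁, by ring, ?_⟩
  field_simp
  ring

private lemma stmt2_core_neg (d₁ d₂ a d e θ : ℝ) (hd : d₁ ≠ d₂) (hθ : 0 < θ)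
    (H : ∀ ξ x y : ℝ, (x-a)*(x-d) - (y+ξ*d₁)*(y+ξ*d₂) = e →
      (x-a)*(y+ξ*d₂) + (x-d)*(y+ξ*d₁) = 0 → x ≤ -θ) : a < 0 := by
  by_contra ha
  push_neg at ha
  have key : ∃ x u v : ℝ, -θ < x ∧ (x-a)*(x-d) - u*v = e ∧ (x-a)*v + (x-d)*u = 0 := by
    rcases lt_trichotomy e 0 with he | he | he
    · rcases eq_or_ne a d with had | had
      · refine ⟨a, Real.sqrt (-e), Real.sqrt (-e), by linarith, ?_, ?_⟩
        · have hs : Real.sqrt (-e) ^ 2 = -e := Real.sq_sqrt (by linarith)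
          rw [← had]; nlinarith [hs]
        · rw [← had]; ring
      · rcases lt_or_gt_of_ne had with h1 | h1
        · set δ := min (min ((d-a)/2) (θ/2)) ((-e)/(1+(d-a))) with hδ
          have hδ1 : δ ≤ (d-a)/2 := le_trans (min_le_left _ _) (min_le_left _ _)
          have hδ3 : δ ≤ (-e)/(1+(d-a)) := min_le_right _ _
          have hda : (0:ℝ) < 1 + (d-a) := by linarith
          have hδ0 : 0 < δ :=
            lt_min (lt_min (by linarith) (by linarith)) (div_pos (by linarith) hda)
          have hδe : δ * (1+(d-a)) ≤ -e := (le_div_iff₀ hda).mp hδ3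
          have hp : (δ:ℝ) ≠ 0 := ne_of_gt hδ0
          have hq : a + δ - d ≠ 0 := by intro hh; nlinarith
          have hsol : 0 ≤ δ*(e - δ*(a+δ-d))/(a+δ-d) := by
            rw [div_nonneg_iff]; right
            constructor
            · nlinarith [hδe, mul_nonneg hδ0.le hδ0.le]
            · linarith
          obtain ⟨u, v, h1', h2'⟩ := stmt2_solve δ (a+δ-d) e hp hq hsol
          exact ⟨a+δ, u, v, by linarith, by linear_combination h1', by linear_combination h2'⟩
        · set δ := min (min ((a-d)/2) (θ/2)) ((-e)/(1+(a-d))) with hδ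
          have hδ1 : δ ≤ (a-d)/2 := le_trans (min_le_left _ _) (min_le_left _ _)
          have hδ2 : δ ≤ θ/2 := le_trans (min_le_left _ _) (min_le_right _ _)
          have hδ3 : δ ≤ (-e)/(1+(a-d)) := min_le_right _ _
          have hda : (0:ℝ) < 1 + (a-d) := by linarith
          have hδ0 : 0 < δ :=
            lt_min (lt_min (by linarith) (by linarith)) (div_pos (by linarith) hda)
          have hδe : δ * (1+(a-d)) ≤ -e := (le_div_iff₀ hda).mp hδ3
          have hp : (-δ:ℝ) ≠ 0 := by simp; exact ne_of_gt hδ0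
          have hq : a - δ - d ≠ 0 := by intro hh; nlinarith
          have hsol : 0 ≤ (-δ)*(e - (-δ)*(a-δ-d))/(a-δ-d) := by
            apply div_nonneg _ (by linarith)
            nlinarith [hδe, mul_nonneg hδ0.le hδ0.le]
          obtain ⟨u, v, h1', h2'⟩ := stmt2_solve (-δ) (a-δ-d) e hp hq hsol
          exact ⟨a-δ, u, v, by linarith, by linear_combination h1', by linear_combination h2'⟩
    · exact ⟨a, 0, 0, by linarith, by rw [he]; ring, by ring⟩
    · rcases le_total a d with h1 | h1
      · set ε := min 1 (e/(1+(d-a))) with hε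
        have habs : (0:ℝ) < 1 + (d-a) := by linarith
        have hε0 : 0 < ε := lt_min one_pos (div_pos he habs)
        have hε1 : ε ≤ 1 := min_le_left _ _
        have hε2 : ε * (1+(d-a)) ≤ e := (le_div_iff₀ habs).mp (min_le_right _ _)
        have hp : d + ε - a ≠ 0 := by intro hh; nlinarith
        have hq : (ε:ℝ) ≠ 0 := ne_of_gt hε0
        have hsol : 0 ≤ (d+ε-a)*(e - (d+ε-a)*ε)/ε := by
          apply div_nonneg _ (le_of_lt hε0)
          apply mul_nonneg (by linarith)
          nlinarith
        obtain ⟨u, v, h1', h2'⟩ := stmt2_solve (d+ε-a) ε e hp hq hsol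
        refine ⟨d+ε, u, v, by linarith, by linear_combination h1', by linear_combination h2'⟩
      · set ε := min 1 (e/(1+(a-d))) with hε
        have habs : (0:ℝ) < 1 + (a-d) := by linarith
        have hε0 : 0 < ε := lt_min one_pos (div_pos he habs)
        have hε1 : ε ≤ 1 := min_le_left _ _
        have hε2 : ε * (1+(a-d)) ≤ e := (le_div_iff₀ habs).mp (min_le_right _ _)
        have hp : (ε:ℝ) ≠ 0 := ne_of_gt hε0
        have hq : a + ε - d ≠ 0 := by intro hh; nlinarith
        have hsol : 0 ≤ ε*(e - ε*(a+ε-d))/(a+ε-d) := by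
          apply div_nonneg _ (by linarith)
          apply mul_nonneg (le_of_lt hε0)
          nlinarith
        obtain ⟨u, v, h1', h2'⟩ := stmt2_solve ε (a+ε-d) e hp hq hsol
        refine ⟨a+ε, u, v, by linarith, by linear_combination h1', by linear_combination h2'⟩
  obtain ⟨x, u, v, hxθ, h1, h2⟩ := key
  obtain ⟨ξ, y, hu, hv⟩ := stmt2_realize d₁ d₂ u v hd
  have := H ξ x y (by rw [hu, hv]; exact h1) (by rw [hu, hv]; linarith [h2])
  linarith

private lemma stmt2_spec_iff (d₁ d₂ a b c d ξ : ℝ) (lam : ℂ) :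
    lam ∈ spectrum ℂ
        ((-(Complex.I * ξ)) • (Matrix.diagonal ![d₁, d₂]).map Complex.ofReal
          + (!![a, b; c, d]).map Complex.ofReal)
    ↔ (lam - (a - Complex.I*ξ*d₁)) * (lam - (d - Complex.I*ξ*d₂)) - (b*c : ℝ) = 0 := by
  rw [spectrum.mem_iff]
  rw [show ∀ N : Matrix (Fin 2) (Fin 2) ℂ, IsUnit N ↔ IsUnit N.det from
    fun N => Matrix.isUnit_iff_isUnit_det N]
  rw [isUnit_iff_ne_zero, not_ne_iff, Matrix.det_fin_two]
  simp [Matrix.algebraMap_eq_diagonal, Matrix.diagonal, Matrix.map_apply]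
  constructor <;> intro h <;> linear_combination h

private lemma stmt2_creal (a d d₁ d₂ ξ e : ℝ) (lam : ℂ) :
    ((lam - (a - Complex.I*ξ*d₁)) * (lam - (d - Complex.I*ξ*d₂)) - (e:ℝ) = 0)
    ↔ ((lam.re-a)*(lam.re-d) - (lam.im+ξ*d₁)*(lam.im+ξ*d₂) = e ∧
       (lam.re-a)*(lam.im+ξ*d₂) + (lam.re-d)*(lam.im+ξ*d₁) = 0) := by
  rw [Complex.ext_iff]
  simp only [Complex.sub_re, Complex.sub_im, Complex.mul_re, Complex.mul_im,
    Complex.ofReal_re, Complex.ofReal_im, Complex.I_re, Complex.I_im,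
    Complex.zero_re, Complex.zero_im]
  constructor <;> rintro ⟨h1, h2⟩ <;> exact ⟨by linear_combination h1, by linear_combination h2⟩

/-- Uniform spectral stability of the 2×2 symbol `-iξA + G` is equivalent to
`a < 0`, `d < 0` and `ad - bc > 0`. -/
theorem stmt2 (d₁ d₂ a b c d : ℝ) (hd : d₁ ≠ d₂) :
    (∃ θ > (0:ℝ), ∀ ξ : ℝ, ∀ lam ∈ spectrum ℂ
        ((-(Complex.I * ξ)) • (Matrix.diagonal ![d₁, d₂]).map Complex.ofReal
          + (!![a, b; c, d]).map Complex.ofReal),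
      lam.re ≤ -θ)
    ↔ (a < 0 ∧ d < 0 ∧ a * d - b * c > 0) := by
  constructor
  · rintro ⟨θ, hθ, H⟩
    have Hr : ∀ ξ x y : ℝ, (x-a)*(x-d) - (y+ξ*d₁)*(y+ξ*d₂) = b*c →
        (x-a)*(y+ξ*d₂) + (x-d)*(y+ξ*d₁) = 0 → x ≤ -θ := by
      intro ξ x y h1 h2
      have hmem : (⟨x, y⟩ : ℂ) ∈ spectrum ℂ
          ((-(Complex.I * ξ)) • (Matrix.diagonal ![d₁, d₂]).map Complex.ofReal
            + (!![a, b; c, d]).map Complex.ofReal) := by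
        rw [stmt2_spec_iff, stmt2_creal]
        exact ⟨h1, h2⟩
      exact H ξ _ hmem
    have ha : a < 0 := stmt2_core_neg d₁ d₂ a d (b*c) θ hd hθ Hr
    have hd' : d < 0 := by
      apply stmt2_core_neg d₂ d₁ d a (b*c) θ (Ne.symm hd) hθ
      intro ξ x y h1 h2
      exact Hr ξ x y (by linear_combination h1) (by linear_combination h2)
    refine ⟨ha, hd', ?_⟩
    by_contra hdet
    push_neg at hdet
    -- construct nonnegative real root at ξ = 0
    have hΔ : 0 ≤ (a-d)^2 + 4*(b*c) := by nlinarith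
    set s := Real.sqrt ((a-d)^2 + 4*(b*c)) with hs
    have hs2 : s^2 = (a-d)^2 + 4*(b*c) := Real.sq_sqrt hΔ
    have hs1 : -(a+d) ≤ s := by
      have h1 : Real.sqrt ((a+d)^2) ≤ s := Real.sqrt_le_sqrt (by nlinarith)
      rw [Real.sqrt_sq_eq_abs] at h1
      calc -(a+d) ≤ |a+d| := neg_le_abs _
        _ ≤ s := h1
    have hx0 : 0 ≤ ((a+d) + s)/2 := by linarith
    have := Hr 0 (((a+d) + s)/2) 0 (by nlinarith [hs2]) (by ring)
    linarith
  · rintro ⟨ha, hd', hdet⟩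
    have hsum : 0 < -a - d := by linarith
    refine ⟨min (min (-a/2) (-d/2)) ((a*d - b*c)/(2*(-a-d))), ?_, ?_⟩
    · apply lt_min (lt_min (by linarith) (by linarith))
      positivity
    · intro ξ lam hmem
      rw [stmt2_spec_iff, stmt2_creal] at hmem
      obtain ⟨h1, h2⟩ := hmem
      set θ := min (min (-a/2) (-d/2)) ((a*d - b*c)/(2*(-a-d))) with hθdef
      have hθ1 : θ ≤ -a/2 := le_trans (min_le_left _ _) (min_le_left _ _)
      have hθ2 : θ ≤ -d/2 := le_trans (min_le_left _ _) (min_le_right _ _)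
      have hθ3 : θ * (2*(-a-d)) ≤ a*d - b*c :=
        (le_div_iff₀ (by linarith)).mp (min_le_right _ _)
      by_contra hx
      push_neg at hx
      set x := lam.re
      set y := lam.im
      have hp : 0 < x - a := by linarith
      have hq : 0 < x - d := by linarith
      -- u*v ≤ 0
      have huv : (y+ξ*d₁)*(y+ξ*d₂) ≤ 0 := by
        have h3 : (x-a)*((y+ξ*d₁)*(y+ξ*d₂)) = -((x-d)*(y+ξ*d₁)^2) := by
          linear_combination (y+ξ*d₁) * h2
        nlinarith [mul_nonneg hq.le (sq_nonneg (y+ξ*d₁))]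
      have hpq : (x-a)*(x-d) > (-θ-a)*(-θ-d) := by
        apply mul_lt_mul'' (by linarith) (by linarith) (by linarith) (by linarith)
      nlinarith [sq_nonneg θ]
end

section
/- Suppose d_1 ≠ d_2 are real and G = [[a,b],[c,d]] is real with a < 0, d < 0, ad - bc > 0. Then there exist α_1 > 0, α_2 > 0 such that for S = diag(α_1, α_2), the symmetric part of SG is negative definite (and SA is symmetric for A = diag(d_1,d_2)). -/
open Matrix

lemma quadneg_aux (a b c d α₁ α₂ : ℝ) (h1 : 0 < α₁) (h2 : 0 < α₂)
    (ha : a < 0) (hdd : d < 0)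
    (hkey : (α₁ * b + α₂ * c) ^ 2 < 4 * (α₁ * a) * (α₂ * d)) :
    ∀ x : Fin 2 → ℝ, x ≠ 0 →
      x ⬝ᵥ ((Matrix.diagonal ![α₁, α₂] * !![a, b; c, d]).mulVec x) < 0 := by
  intro x hx
  have hx' : x 0 ≠ 0 ∨ x 1 ≠ 0 := by
    by_contra h'
    push_neg at h'
    exact hx (funext fun i => by fin_cases i <;> simp [h'.1, h'.2])
  have hM : Matrix.diagonal ![α₁, α₂] * !![a, b; c, d]
      = !![α₁ * a, α₁ * b; α₂ * c, α₂ * d] := by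
    ext i j
    fin_cases i <;> fin_cases j <;>
      simp [Matrix.mul_apply, Fin.sum_univ_two]
  rw [hM]
  have hA : α₁ * a < 0 := mul_neg_of_pos_of_neg h1 ha
  have expand : x ⬝ᵥ ((!![α₁ * a, α₁ * b; α₂ * c, α₂ * d]).mulVec x)
      = (α₁ * a) * (x 0) ^ 2 + (α₁ * b + α₂ * c) * (x 0 * x 1)
        + (α₂ * d) * (x 1) ^ 2 := by
    simp [Matrix.mulVec, dotProduct, Fin.sum_univ_two]
    ring
  rw [expand]
  rcases hx' with h0 | h1'
  · nlinarith [sq_nonneg (2 * (α₂ * d) * x 1 + (α₁ * b + α₂ * c) * x 0),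
      mul_pos (sub_pos.mpr hkey) (mul_self_pos.mpr h0)]
  · nlinarith [sq_nonneg (2 * (α₁ * a) * x 0 + (α₁ * b + α₂ * c) * x 1),
      mul_self_pos.mpr h1', sq_nonneg (x 0)]

/-- If `a < 0`, `d < 0` and `ad - bc > 0`, there is a positive diagonal symmetrizer
`S = diag(α₁, α₂)` making the symmetric part of `SG` negative definite, with `SA` symmetric. -/
theorem stmt3 (d₁ d₂ a b c d : ℝ) (hd : d₁ ≠ d₂)
    (ha : a < 0) (hdd : d < 0) (hdet : a * d - b * c > 0) :
    ∃ α₁ > (0:ℝ), ∃ α₂ > (0:ℝ),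
      (∀ x : Fin 2 → ℝ, x ≠ 0 →
        x ⬝ᵥ ((Matrix.diagonal ![α₁, α₂] * !![a, b; c, d]).mulVec x) < 0)
      ∧ (Matrix.diagonal ![α₁, α₂] * Matrix.diagonal ![d₁, d₂]).IsSymm := by
  have had : 0 < a * d := mul_pos_of_neg_of_neg ha hdd
  have symm : ∀ α₁ α₂ : ℝ,
      (Matrix.diagonal ![α₁, α₂] * Matrix.diagonal ![d₁, d₂]).IsSymm := by
    intro α₁ α₂
    rw [Matrix.diagonal_mul_diagonal]
    exact Matrix.isSymm_diagonal _
  rcases lt_trichotomy (b * c) 0 with hbc | hbc | hbc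
  · -- bc < 0, so b ≠ 0 and c ≠ 0; use α₁ = |c|, α₂ = |b|
    have hb : b ≠ 0 := fun h => by simp [h] at hbc
    have hc : c ≠ 0 := fun h => by simp [h] at hbc
    refine ⟨|c|, abs_pos.mpr hc, |b|, abs_pos.mpr hb, ?_, symm _ _⟩
    apply quadneg_aux _ _ _ _ _ _ (abs_pos.mpr hc) (abs_pos.mpr hb) ha hdd
    have hcancel : |c| * b + |b| * c = 0 := by
      rcases abs_cases b with ⟨hb1, hb2⟩ | ⟨hb1, hb2⟩ <;>
        rcases abs_cases c with ⟨hc1, hc2⟩ | ⟨hc1, hc2⟩ <;> nlinarith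
    rw [hcancel]
    have : 0 < |c| * |b| := mul_pos (abs_pos.mpr hc) (abs_pos.mpr hb)
    nlinarith [mul_pos (mul_pos this had) (by norm_num : (0:ℝ) < 4)]
  · -- bc = 0
    rcases eq_or_ne c 0 with hc | hc
    · rcases eq_or_ne b 0 with hb | hb
      · -- b = c = 0 : take (1,1)
        refine ⟨1, one_pos, 1, one_pos, ?_, symm _ _⟩
        apply quadneg_aux _ _ _ _ _ _ one_pos one_pos ha hdd
        rw [hb, hc]; nlinarith
      · -- c = 0, b ≠ 0 : α₁ = 2ad/|b|, α₂ = |b|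
        have hbpos : 0 < |b| := abs_pos.mpr hb
        have h1 : 0 < 2 * (a * d) / |b| := by positivity
        refine ⟨2 * (a * d) / |b|, h1, |b|, hbpos, ?_, symm _ _⟩
        apply quadneg_aux _ _ _ _ _ _ h1 hbpos ha hdd
        rw [hc]
        have hb2 : (2 * (a * d) / |b|) * |b| = 2 * (a * d) := by
          field_simp
        have habs : |b| * |b| = b * b := abs_mul_abs_self b
        have : (2 * (a * d) / |b|) * b + |b| * 0 = 2 * (a * d) * b / |b| := by
          ring
        rw [this]
        rw [div_pow, sq_abs]
        rw [div_lt_iff₀ (by positivity : (0:ℝ) < b ^ 2)]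
        have h4 : 4 * (2 * (a * d) / |b| * a) * (|b| * d)
            = 8 * (a * d) * (a * d) := by
          field_simp; ring
        rw [h4]
        nlinarith [mul_pos (mul_pos had had) (mul_self_pos.mpr hb)]
    · -- c ≠ 0 (so b = 0) : α₁ = |c|, α₂ = 2ad/|c|
      have hb : b = 0 := by
        rcases mul_eq_zero.mp hbc with h | h
        · exact h
        · exact absurd h hc
      have hcpos : 0 < |c| := abs_pos.mpr hc
      have h2 : 0 < 2 * (a * d) / |c| := by positivity
      refine ⟨|c|, hcpos, 2 * (a * d) / |c|, h2, ?_, symm _ _⟩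
      apply quadneg_aux _ _ _ _ _ _ hcpos h2 ha hdd
      rw [hb]
      have : |c| * 0 + (2 * (a * d) / |c|) * c = 2 * (a * d) * c / |c| := by
        ring
      rw [this, div_pow, sq_abs]
      rw [div_lt_iff₀ (by positivity : (0:ℝ) < c ^ 2)]
      have h4 : 4 * (|c| * a) * (2 * (a * d) / |c| * d)
          = 8 * (a * d) * (a * d) := by
        field_simp; ring
      rw [h4]
      nlinarith [mul_pos (mul_pos had had) (mul_self_pos.mpr hc)]
  · -- bc > 0 : α₁ = |c|, α₂ = |b|
    have hb : b ≠ 0 := fun h => by simp [h] at hbc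
    have hc : c ≠ 0 := fun h => by simp [h] at hbc
    refine ⟨|c|, abs_pos.mpr hc, |b|, abs_pos.mpr hb, ?_, symm _ _⟩
    apply quadneg_aux _ _ _ _ _ _ (abs_pos.mpr hc) (abs_pos.mpr hb) ha hdd
    have habs : |c| * b + |b| * c = 2 * (b * c) ∨ |c| * b + |b| * c = -(2 * (b * c)) := by
      rcases abs_cases b with ⟨hb1, hb2⟩ | ⟨hb1, hb2⟩ <;>
        rcases abs_cases c with ⟨hc1, hc2⟩ | ⟨hc1, hc2⟩ <;>
        first
          | (left; nlinarith)
          | (right; nlinarith)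
    have hcb : |c| * |b| = b * c := by
      rw [← abs_mul]
      exact abs_of_pos (by linarith [hbc] : 0 < c * b) |>.trans (mul_comm c b)
    have key : (|c| * b + |b| * c) ^ 2 = 4 * (b * c) ^ 2 := by
      rcases habs with h | h <;> rw [h] <;> ring
    rw [key]
    have h4 : 4 * (|c| * a) * (|b| * d) = 4 * (b * c) * (a * d) := by
      nlinarith [hcb]
    rw [h4]
    nlinarith [mul_pos hbc (sub_pos.mpr (by linarith : b * c < a * d))]
end

section
/- Let A = diag(1,3,2) and G = [[-1,1,1],[-1,-1,-1],[1,1,-1]]. For every diagonal matrix S = diag(α_1, α_2, α_3) with α_1, α_2, α_3 > 0, the symmetric part of SG is NOT negative definite. -/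
open Matrix

/-- For `G = [[-1,1,1],[-1,-1,-1],[1,1,-1]]` and any positive diagonal
`S = diag(α₁,α₂,α₃)`, the symmetric part of `SG` is not negative definite. -/
theorem stmt7 (α : Fin 3 → ℝ) (hα : ∀ i, 0 < α i) :
    ¬ (∀ x : Fin 3 → ℝ, x ≠ 0 →
      x ⬝ᵥ ((Matrix.diagonal α
        * !![(-1:ℝ), 1, 1; -1, -1, -1; 1, 1, -1]).mulVec x) < 0) := by
  intro h
  have hx : (![1,0,1] : Fin 3 → ℝ) ≠ 0 := by
    intro he
    have := congrFun he 0
    norm_num at this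
  have := h ![1,0,1] hx
  rw [show ((Matrix.diagonal α * !![(-1:ℝ), 1, 1; -1, -1, -1; 1, 1, -1])) =
      !![-α 0, α 0, α 0; -α 1, -α 1, -α 1; α 2, α 2, -α 2] from by
    ext i j
    fin_cases i <;> fin_cases j <;>
      simp [Matrix.mul_apply, Fin.sum_univ_three, Matrix.diagonal_apply,
        Matrix.vecHead, Matrix.vecTail]] at this
  simp [dotProduct, mulVec, Fin.sum_univ_three, Matrix.vecHead, Matrix.vecTail] at this
end

section
/- Let A = diag(1,3,2) and G = [[-1,1,1],[-1,-1,-1],[1,1,-1]]. For every ξ ∈ ℝ and every τ ∈ ℝ, iτ is not an eigenvalue of -iξA + G; i.e., the matrix -iξA + G - iτ·I is invertible for all real ξ, τ. -/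
/-- For `A = diag(1,3,2)`, `G = [[-1,1,1],[-1,-1,-1],[1,1,-1]]`, the matrix
`-iξA + G - iτI` is invertible for all real `ξ, τ`. -/
theorem stmt10 (ξ τ : ℝ) :
    IsUnit ((-(Complex.I * ξ)) • (Matrix.diagonal ![(1:ℝ), 3, 2]).map Complex.ofReal
      + (!![(-1:ℝ), 1, 1; -1, -1, -1; 1, 1, -1]).map Complex.ofReal
      - (Complex.I * τ) • (1 : Matrix (Fin 3) (Fin 3) ℂ)) := by
  rw [Matrix.isUnit_iff_isUnit_det, isUnit_iff_ne_zero]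
  have hdet : ((-(Complex.I * ξ)) • (Matrix.diagonal ![(1:ℝ), 3, 2]).map Complex.ofReal
      + (!![(-1:ℝ), 1, 1; -1, -1, -1; 1, 1, -1]).map Complex.ofReal
      - (Complex.I * τ) • (1 : Matrix (Fin 3) (Fin 3) ℂ)).det
      = Complex.ofReal (11*ξ^2 + 12*ξ*τ + 3*τ^2 - 4)
        + Complex.I * Complex.ofReal (6*ξ^3 + 11*ξ^2*τ + 6*ξ*τ^2 + τ^3 - 6*ξ - 4*τ) := by
    simp only [Matrix.det_fin_three, Matrix.sub_apply, Matrix.add_apply, Matrix.smul_apply,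
      Matrix.map_apply, Matrix.one_apply, Matrix.diagonal, Matrix.vecHead, Matrix.vecTail,
      Matrix.cons_val', Matrix.cons_val_zero, Matrix.cons_val_one, Matrix.head_cons,
      Matrix.head_fin_const, Matrix.of_apply, Fin.isValue, Matrix.empty_val',
      Matrix.cons_val_fin_one, Matrix.cons_val_two, Matrix.tail_cons, Function.comp_apply,
      Fin.succ_zero_eq_one, Fin.succ_one_eq_two, ne_eq]
    simp only [Complex.ext_iff, Complex.add_re, Complex.add_im, Complex.sub_re, Complex.sub_im,
      Complex.mul_re, Complex.mul_im, Complex.neg_re, Complex.neg_im, Complex.ofReal_re,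
      Complex.ofReal_im, Complex.I_re, Complex.I_im, Complex.one_re, Complex.one_im,
      Complex.zero_re, Complex.zero_im, smul_eq_mul]
    norm_num [Fin.ext_iff]
    constructor <;> ring
  rw [hdet]
  intro h
  rw [Complex.ext_iff] at h
  simp only [Complex.add_re, Complex.add_im, Complex.mul_re, Complex.mul_im, Complex.ofReal_re,
    Complex.ofReal_im, Complex.I_re, Complex.I_im, Complex.zero_re, Complex.zero_im] at h
  obtain ⟨h1, h2⟩ := h
  have hR : 11*ξ^2 + 12*ξ*τ + 3*τ^2 - 4 = 0 := by linear_combination h1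
  have hQ : 6*ξ^3 + 11*ξ^2*τ + 6*ξ*τ^2 + τ^3 - 6*ξ - 4*τ = 0 := by linear_combination h2
  have e1 : 3*(τ+2*ξ)^2 = ξ^2 + 4 := by linear_combination hR
  have e2 : ξ = (τ+2*ξ)^3 := by
    linear_combination (1/2) * hQ - ((τ+2*ξ)/2) * e1
  have e3 : ξ^2 = (τ+2*ξ)^6 := by linear_combination (ξ + (τ+2*ξ)^3) * e2
  nlinarith [e1, e3, sq_nonneg ((τ+2*ξ)^2 - 1), sq_nonneg (τ+2*ξ)]
end

section
/- Let A = diag(1,3,2) and G = [[-1,1,1],[-1,-1,-1],[1,1,-1]]. There exists θ > 0 such that for all ξ ∈ ℝ, every eigenvalue λ ∈ ℂ of -iξA + G satisfies Re(λ) < -θ. -/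
/-- Core inequality: for `x ≥ 7/10` and `T ≥ 0`,
`T*(x*T+x^3-1)^2 - 3*x^2*T + x^4+x^2+2*x > 0`. -/
lemma stmt11_core (x T : ℝ) (hx : x ≥ 7/10) (hT : T ≥ 0) :
    T*(x*T+x^3-1)^2 - 3*x^2*T + x^4+x^2+2*x > 0 := by
  rcases le_or_gt 1 x with hx1 | hx1
  · have h3 : x^3 - 1 ≥ 0 := by nlinarith [mul_nonneg (sub_nonneg.2 hx1) (by positivity : (0:ℝ) ≤ x^2+x+1)]
    have h4 : (x*T+x^3-1) + x*T ≥ 0 := by nlinarith [mul_nonneg (le_of_lt (by positivity : (0:ℝ) < x)) hT]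
    have h2 : T*(x*T+x^3-1)^2 - x^2*T^3 ≥ 0 := by nlinarith [mul_nonneg (mul_nonneg hT h3) h4]
    nlinarith [mul_nonneg (mul_nonneg (sq_nonneg x) (sq_nonneg (T-1))) (by linarith : T+2 ≥ 0)]
  · rcases le_or_gt T (16/5) with h | h
    · have hg1 : x - 7/10 ≥ 0 := by linarith
      have hg2 : 1 - x ≥ 0 := by linarith
      rcases le_or_gt T 1 with hc | hc
      · nlinarith [mul_nonneg hT (sub_nonneg.2 hc), sq_nonneg (x*T+x^3-1),
          mul_nonneg hg1 hg2, mul_nonneg hT (sq_nonneg (x*T+x^3-1)),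
          sq_nonneg (x-7/10), sq_nonneg (T-1)]
      · rcases le_or_gt T 2 with hd | hd
        · have hg3 : T - 1 ≥ 0 := by linarith
          have hg4 : 2 - T ≥ 0 := by linarith
          nlinarith [mul_nonneg hg3 hg4, sq_nonneg (x*T - 117/100), mul_nonneg hg1 hg2,
            mul_nonneg (mul_nonneg hg3 hg4) (le_of_lt (by positivity : (0:ℝ) < x)),
            mul_nonneg hg1 (sq_nonneg (x*T-117/100)), mul_nonneg hg3 (sq_nonneg (x - 7/10)),
            sq_nonneg (x-7/10), sq_nonneg (x*T+x^3-1-x)]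
        · have hg3 : T - 2 ≥ 0 := by linarith
          have hg4 : 16/5 - T ≥ 0 := by linarith
          nlinarith [mul_nonneg hg3 hg4, mul_nonneg hg1 hg2, sq_nonneg (x*T - 7/5),
            mul_nonneg (mul_nonneg hg3 hg4) hg1, mul_nonneg (mul_nonneg hg3 hg4) hg2,
            mul_nonneg (mul_nonneg hg1 hg2) hg3, mul_nonneg (mul_nonneg hg1 hg2) hg4,
            mul_nonneg hg1 (sq_nonneg (x*T - 7/5)), mul_nonneg hg3 (sq_nonneg (x - 7/10)),
            mul_nonneg hg3 (sq_nonneg (x*T - 7/5)), sq_nonneg (x*T + x^3 - 1 - 3/4)]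
    · have hw : (x*T+x^3-1)^2 - 3*x^2 ≥ 0 := by
        nlinarith [sq_nonneg (x*T+x^3-1-2*x), sq_nonneg x]
      nlinarith [mul_nonneg hT hw]

/-- For `A = diag(1,3,2)`, `G = [[-1,1,1],[-1,-1,-1],[1,1,-1]]`, there is a uniform spectral
gap: some `θ > 0` with `Re λ < -θ` for every eigenvalue `λ` of `-iξA + G`, all `ξ ∈ ℝ`. -/
theorem stmt11 :
    ∃ θ > (0:ℝ), ∀ ξ : ℝ, ∀ lam ∈ spectrum ℂ
      ((-(Complex.I * ξ)) • (Matrix.diagonal ![(1:ℝ), 3, 2]).map Complex.ofReal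
        + (!![(-1:ℝ), 1, 1; -1, -1, -1; 1, 1, -1]).map Complex.ofReal),
      lam.re < -θ := by
  refine ⟨3/10, by norm_num, ?_⟩
  intro ξ lam h
  rw [spectrum.mem_iff] at h
  have hdet : (algebraMap ℂ _ lam - ((-(Complex.I * ξ)) • (Matrix.diagonal ![(1:ℝ), 3, 2]).map Complex.ofReal
        + (!![(-1:ℝ), 1, 1; -1, -1, -1; 1, 1, -1]).map Complex.ofReal)).det = 0 := by
    by_contra hne
    exact h ((Matrix.isUnit_iff_isUnit_det _).mpr (isUnit_iff_ne_zero.mpr hne))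
  rw [Matrix.det_fin_three] at hdet
  simp [Matrix.algebraMap_matrix_apply, Matrix.diagonal, Matrix.vecHead, Matrix.vecTail] at hdet
  rw [Complex.ext_iff] at hdet
  obtain ⟨h1, h2⟩ := hdet
  simp [Complex.mul_re, Complex.mul_im] at h1 h2
  by_contra hcon
  push_neg at hcon
  set a := lam.re with ha
  set b := lam.im with hb
  have hx : a + 1 ≥ 7/10 := by linarith
  have key : (b+2*ξ)*((a+1)^3+(a+1)*(b+2*ξ)^2-1) - ξ*(a+1) = 0 := by
    linear_combination ((a+1)*h2 - (b+2*ξ)*h1)/2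
  have hP : (b+2*ξ)^2*((a+1)*(b+2*ξ)^2+(a+1)^3-1)^2 - 3*(a+1)^2*(b+2*ξ)^2
      + (a+1)^4+(a+1)^2+2*(a+1) = 0 := by
    linear_combination ((b+2*ξ)*((a+1)^3+(a+1)*(b+2*ξ)^2-1) + ξ*(a+1))*key + (a+1)*h1
  have hpos := stmt11_core (a+1) ((b+2*ξ)^2) hx (sq_nonneg _)
  nlinarith [hpos, hP]
end

section
/- Let M_λ = -λ D⁻¹ + D⁻¹Γ + N(λ)/λ where D = diag(d_j) invertible with distinct entries, Γ = diag(γ_j) real, and N(λ) uniformly bounded for |λ| large. Then, for each j, the j-th eigenvalue μ_j(λ) of M_λ satisfies μ_j(λ) = -(λ - γ_j)/d_j + O(1/|λ|) as |λ| → ∞. -/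
open Polynomial Matrix
set_option maxHeartbeats 1000000

lemma evalCharpoly' {n : ℕ} (A : Matrix (Fin n) (Fin n) ℂ) (z : ℂ) :
    A.charpoly.eval z = (z • (1 : Matrix (Fin n) (Fin n) ℂ) - A).det := by
  rw [Matrix.charpoly, ← Polynomial.coe_evalRingHom, RingHom.map_det]
  congr 1
  ext i j
  rcases eq_or_ne i j with rfl | h
  · simp [charmatrix_apply_eq, Matrix.one_apply]
  · simp [charmatrix_apply_ne _ _ _ h, Matrix.one_apply_ne h]

lemma memSpectrumIff {n : ℕ} (A : Matrix (Fin n) (Fin n) ℂ) (z : ℂ) :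
    z ∈ spectrum ℂ A ↔ A.charpoly.eval z = 0 := by
  rw [spectrum.mem_iff, Algebra.algebraMap_eq_smul_one, evalCharpoly']
  rw [Matrix.isUnit_iff_isUnit_det, isUnit_iff_ne_zero, not_not]

lemma hasEigen_of_root {n : ℕ} (A : Matrix (Fin n) (Fin n) ℂ) (z : ℂ)
    (h : A.charpoly.eval z = 0) :
    Module.End.HasEigenvalue (Matrix.toLin' A) z := by
  rw [evalCharpoly'] at h
  obtain ⟨v, hv0, hv⟩ := (Matrix.exists_mulVec_eq_zero_iff).mpr h
  apply Module.End.hasEigenvalue_of_hasEigenvector (x := v)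
  constructor
  · rw [Module.End.mem_eigenspace_iff, Matrix.toLin'_apply]
    have := hv
    rw [Matrix.sub_mulVec, Matrix.smul_mulVec, Matrix.one_mulVec] at this
    have h2 : z • v - A.mulVec v = 0 := this
    have := sub_eq_zero.mp h2
    exact this.symm
  · exact hv0

lemma prodLB (a : ℝ) (ha : 0 ≤ a) (m : Multiset ℝ) (h : ∀ x ∈ m, a ≤ x) :
    a ^ (Multiset.card m) ≤ m.prod := by
  induction m using Multiset.induction_on with
  | empty => simp
  | cons x s ih =>
    have hx : a ≤ x := h x (Multiset.mem_cons_self _ _)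
    have hs : ∀ y ∈ s, a ≤ y := fun y hy => h y (Multiset.mem_cons_of_mem hy)
    rw [Multiset.card_cons, Multiset.prod_cons, pow_succ']
    exact mul_le_mul hx (ih hs) (pow_nonneg ha _) (le_trans ha hx)

lemma cardFinsetSum {α β : Type*} (s : Finset β) (f : β → Multiset α) :
    Multiset.card (∑ j ∈ s, f j) = ∑ j ∈ s, Multiset.card (f j) := by
  classical
  induction s using Finset.cons_induction with
  | empty => simp
  | cons b s hb ih => simp [Finset.sum_cons, ih]

lemma detBoundRow {n : ℕ} (M : Matrix (Fin n) (Fin n) ℂ) (j : Fin n) (e T : ℝ)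
    (hT : 0 ≤ T)
    (hrow : ∀ l, ‖M j l‖ ≤ e) (hall : ∀ k l, ‖M k l‖ ≤ T) :
    ‖M.det‖ ≤ (n.factorial : ℝ) * (e * T ^ (n - 1)) := by
  have he : 0 ≤ e := le_trans (norm_nonneg _) (hrow j)
  rw [Matrix.det_apply]
  refine le_trans (norm_sum_le _ _) ?_
  have key : ∀ σ : Equiv.Perm (Fin n),
      ‖Equiv.Perm.sign σ • ∏ i, M (σ i) i‖ ≤ e * T ^ (n - 1) := by
    intro σ
    have habs : ‖Equiv.Perm.sign σ • ∏ i, M (σ i) i‖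
        = ‖∏ i, M (σ i) i‖ := by
      rcases Int.units_eq_one_or (Equiv.Perm.sign σ) with h | h <;>
        simp [h, Units.smul_def]
    rw [habs, norm_prod]
    have hsplit := Finset.mul_prod_erase Finset.univ
      (fun i => ‖M (σ i) i‖) (Finset.mem_univ (σ.symm j))
    rw [← hsplit]
    have h1 : ‖M (σ (σ.symm j)) (σ.symm j)‖ ≤ e := by
      rw [Equiv.apply_symm_apply]; exact hrow _
    have h2 : ∏ i ∈ Finset.univ.erase (σ.symm j), ‖M (σ i) i‖
        ≤ T ^ (n - 1) := by
      calc ∏ i ∈ Finset.univ.erase (σ.symm j), ‖M (σ i) i‖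
          ≤ ∏ _i ∈ Finset.univ.erase (σ.symm j), T :=
            Finset.prod_le_prod (fun i _ => norm_nonneg _) (fun i _ => hall _ _)
        _ = T ^ (n - 1) := by
            rw [Finset.prod_const, Finset.card_erase_of_mem (Finset.mem_univ _),
              Finset.card_univ, Fintype.card_fin]
    exact mul_le_mul h1 h2 (Finset.prod_nonneg fun i _ => norm_nonneg _) he
  calc ∑ σ : Equiv.Perm (Fin n), ‖Equiv.Perm.sign σ • ∏ i, M (σ i) i‖
      ≤ ∑ _σ : Equiv.Perm (Fin n), (e * T ^ (n - 1)) :=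
        Finset.sum_le_sum fun σ _ => key σ
    _ = (n.factorial : ℝ) * (e * T ^ (n - 1)) := by
        rw [Finset.sum_const, Finset.card_univ, Fintype.card_perm, Fintype.card_fin,
          nsmul_eq_mul]

theorem keyLemma {n : ℕ} (hn : 0 < n) (c : Fin n → ℂ) (A : Matrix (Fin n) (Fin n) ℂ)
    (e S T : ℝ) (he : 0 ≤ e) (heT : e ≤ T)
    (hsep : ∀ j k, j ≠ k → S ≤ ‖c j - c k‖)
    (hdiag : ∀ j, ‖A j j - c j‖ ≤ e)
    (hoff : ∀ j k, j ≠ k → ‖A j k‖ ≤ e)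
    (hT' : ∀ j k, ‖c j - A k k‖ ≤ T)
    (hgap : (n : ℝ) * e < S / 2)
    (hdet : (n.factorial : ℝ) * (e * T ^ (n - 1)) < (S / 2) ^ n) :
    ∃ μ : Fin n → ℂ, spectrum ℂ A = Set.range μ
      ∧ ∀ j, ‖μ j - c j‖ ≤ (n : ℝ) * e := by
  classical
  have hT : 0 ≤ T := le_trans he heT
  have hS : 0 < S := by nlinarith [mul_nonneg (Nat.cast_nonneg (α := ℝ) n) he]
  set p := A.charpoly with hp_def
  have hmonic : p.Monic := A.charpoly_monic
  have hdeg : p.natDegree = n := by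
    rw [hp_def, Matrix.charpoly_natDegree_eq_dim, Fintype.card_fin]
  set rs := p.roots with hrs_def
  have hcard : Multiset.card rs = n := by
    rw [hrs_def, ← hdeg]
    exact (Polynomial.splits_iff_card_roots).mp (IsAlgClosed.splits p)
  -- Gershgorin: every root is within n*e of some center
  have hG : ∀ r ∈ rs, ∃ k, ‖r - c k‖ ≤ (n : ℝ) * e := by
    intro r hr
    have hroot : p.eval r = 0 := by
      exact (Polynomial.mem_roots'.mp hr).2
    obtain ⟨k, hk⟩ := eigenvalue_mem_ball (hasEigen_of_root A r hroot)
    refine ⟨k, ?_⟩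
    have hdist : ‖r - A k k‖ ≤ ∑ l ∈ Finset.univ.erase k, ‖A k l‖ := by
      have := (Metric.mem_closedBall).mp hk
      rw [Complex.dist_eq] at this
      simpa using this
    have hsum : ∑ l ∈ Finset.univ.erase k, ‖A k l‖ ≤ ((n : ℝ) - 1) * e := by
      have hcarde : (Finset.univ.erase k).card = n - 1 := by
        rw [Finset.card_erase_of_mem (Finset.mem_univ _), Finset.card_univ, Fintype.card_fin]
      calc ∑ l ∈ Finset.univ.erase k, ‖A k l‖
          ≤ ∑ _l ∈ Finset.univ.erase k, e :=
            Finset.sum_le_sum fun l hl => hoff k l (Ne.symm (Finset.ne_of_mem_erase hl))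
        _ = ((n : ℝ) - 1) * e := by
            rw [Finset.sum_const, hcarde, nsmul_eq_mul, Nat.cast_sub hn, Nat.cast_one]
    calc ‖r - c k‖ ≤ ‖r - A k k‖ + ‖A k k - c k‖ := by
          have := norm_sub_le_norm_sub_add_norm_sub r (A k k) (c k)
          simpa using this
      _ ≤ ((n : ℝ) - 1) * e + e := add_le_add (le_trans hdist hsum) (hdiag k)
      _ = (n : ℝ) * e := by ring
  -- product formula for |p.eval z|
  have hprod : ∀ z : ℂ, ‖p.eval z‖ = ((rs.map fun r => ‖z - r‖).prod) := by
    intro z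
    have hfact : (rs.map fun a => X - C a).prod = p :=
      Polynomial.prod_multiset_X_sub_C_of_monic_of_roots_card_eq hmonic (by rw [hcard, hdeg])
    conv_lhs => rw [← hfact]
    rw [Polynomial.eval_multiset_prod, Multiset.map_map]
    rw [show ∀ s : Multiset ℂ, ‖s.prod‖ = (s.map (fun x => ‖x‖)).prod from
      fun s => map_multiset_prod (normHom : ℂ →*₀ ℝ) s, Multiset.map_map]
    congr 1
    apply Multiset.map_congr rfl
    intro r _
    simp
  -- each ball contains at least one root
  set f : Fin n → Multiset ℂ := fun j => rs.filter (fun r => ‖r - c j‖ ≤ (n : ℝ) * e)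
    with hf_def
  have hone : ∀ j, 1 ≤ Multiset.card (f j) := by
    intro j
    by_contra hcon
    push_neg at hcon
    interval_cases h : Multiset.card (f j)
    · have hempty : f j = 0 := Multiset.card_eq_zero.mp h
      have hfar : ∀ r ∈ rs, S / 2 ≤ ‖c j - r‖ := by
        intro r hr
        have hnot : ¬ (‖r - c j‖ ≤ (n : ℝ) * e) := by
          intro hcontra
          have : r ∈ f j := Multiset.mem_filter.mpr ⟨hr, hcontra⟩
          rw [hempty] at this
          exact absurd this (Multiset.notMem_zero r)
        push_neg at hnot
        obtain ⟨k, hk⟩ := hG r hr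
        rcases eq_or_ne k j with rfl | hkj
        · exact absurd hk (not_le.mpr hnot)
        · have h1 : S ≤ ‖c j - c k‖ := hsep j k (Ne.symm hkj)
          have h2 : ‖c j - c k‖ ≤ ‖c j - r‖ + ‖r - c k‖ := by
            have := norm_sub_le_norm_sub_add_norm_sub (c j) r (c k)
            simpa using this
          nlinarith
      have hlb : (S / 2) ^ n ≤ ‖p.eval (c j)‖ := by
        rw [hprod (c j)]
        have := prodLB (S / 2) (by positivity)
          ((rs.map fun r => ‖c j - r‖))
          (by intro x hx
              obtain ⟨r, hr, rfl⟩ := Multiset.mem_map.mp hx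
              exact hfar r hr)
        rwa [Multiset.card_map, hcard] at this
      have hub : ‖p.eval (c j)‖ ≤ (n.factorial : ℝ) * (e * T ^ (n - 1)) := by
        rw [evalCharpoly']
        apply detBoundRow _ j e T hT
        · intro l
          rcases eq_or_ne j l with rfl | hjl
          · simpa [Matrix.smul_apply, Matrix.one_apply] using
              (by simpa [norm_sub_rev] using hdiag j :
                ‖c j - A j j‖ ≤ e)
          · simpa [Matrix.smul_apply, Matrix.one_apply_ne hjl] using hoff j l hjl
        · intro k l
          rcases eq_or_ne k l with rfl | hkl
          · simpa [Matrix.smul_apply, Matrix.one_apply] using hT' j k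
          · refine le_trans ?_ heT
            simpa [Matrix.smul_apply, Matrix.one_apply_ne hkl] using hoff k l hkl
      linarith
  -- the balls are disjoint, so the filters sum to at most rs
  have hdisj : ∀ (a : ℂ) (j k : Fin n), j ≠ k →
      ‖a - c j‖ ≤ (n : ℝ) * e → ‖a - c k‖ ≤ (n : ℝ) * e → False := by
    intro a j k hjk h1 h2
    have h3 : S ≤ ‖c j - c k‖ := hsep j k hjk
    have h4 : ‖c j - c k‖ ≤ ‖a - c j‖ + ‖a - c k‖ := by
      have t1 := norm_sub_le_norm_sub_add_norm_sub (c j) a (c k)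
      have t2 : ‖c j - a‖ = ‖a - c j‖ := by
        rw [← norm_neg]; ring_nf
      calc ‖c j - c k‖ ≤ ‖c j - a‖ + ‖a - c k‖ := by
            simpa using t1
        _ = ‖a - c j‖ + ‖a - c k‖ := by rw [t2]
    nlinarith
  have hle : (∑ j : Fin n, f j) ≤ rs := by
    rw [Multiset.le_iff_count]
    intro a
    rw [Multiset.count_sum']
    by_cases hex : ∃ j, ‖a - c j‖ ≤ (n : ℝ) * e
    · obtain ⟨j0, hj0⟩ := hex
      have : ∀ b ∈ Finset.univ, b ≠ j0 → Multiset.count a (f b) = 0 := by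
        intro b _ hb
        rw [hf_def]
        simp only [Multiset.count_filter]
        rw [if_neg]
        intro hcontra
        exact hdisj a b j0 hb hcontra hj0
      rw [Finset.sum_eq_single j0 this (fun h => absurd (Finset.mem_univ j0) h)]
      rw [hf_def]
      simp only [Multiset.count_filter]
      split <;> simp [Multiset.count_le_card]
    · push_neg at hex
      rw [Finset.sum_eq_zero]
      · exact Nat.zero_le _
      · intro b _
        rw [hf_def]
        simp only [Multiset.count_filter]
        exact if_neg (not_le.mpr (hex b))
  have hsumcard : ∑ j : Fin n, Multiset.card (f j) ≤ n := by
    rw [← cardFinsetSum]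
    calc Multiset.card (∑ j : Fin n, f j) ≤ Multiset.card rs := Multiset.card_le_card hle
      _ = n := hcard
  have hexact : ∀ j, Multiset.card (f j) = 1 := by
    intro j0
    refine le_antisymm ?_ (hone j0)
    have hsplit : Multiset.card (f j0) + ∑ j ∈ Finset.univ.erase j0, Multiset.card (f j)
        = ∑ j : Fin n, Multiset.card (f j) :=
      Finset.add_sum_erase Finset.univ (fun j => Multiset.card (f j)) (Finset.mem_univ j0)
    have herase : (n - 1 : ℕ) ≤ ∑ j ∈ Finset.univ.erase j0, Multiset.card (f j) := by
      have hcarde : (Finset.univ.erase j0).card = n - 1 := by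
        rw [Finset.card_erase_of_mem (Finset.mem_univ _), Finset.card_univ, Fintype.card_fin]
      calc (n - 1 : ℕ) = ∑ _j ∈ Finset.univ.erase j0, 1 := by
            rw [Finset.sum_const, hcarde, smul_eq_mul, mul_one]
        _ ≤ ∑ j ∈ Finset.univ.erase j0, Multiset.card (f j) :=
            Finset.sum_le_sum fun j _ => hone j
    omega
  choose μ hμ using fun j => Multiset.card_eq_one.mp (hexact j)
  have hμmem : ∀ j, μ j ∈ f j := by
    intro j; rw [hμ j]; exact Multiset.mem_singleton_self _
  have hμrs : ∀ j, μ j ∈ rs := fun j => (Multiset.mem_filter.mp (hμmem j)).1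
  have hμball : ∀ j, ‖μ j - c j‖ ≤ (n : ℝ) * e :=
    fun j => (Multiset.mem_filter.mp (hμmem j)).2
  refine ⟨μ, ?_, hμball⟩
  ext z
  rw [memSpectrumIff]
  constructor
  · intro hz
    have hzrs : z ∈ rs := by
      rw [hrs_def, Polynomial.mem_roots']
      exact ⟨hmonic.ne_zero, hz⟩
    obtain ⟨k, hk⟩ := hG z hzrs
    have : z ∈ f k := Multiset.mem_filter.mpr ⟨hzrs, hk⟩
    rw [hμ k] at this
    exact ⟨k, (Multiset.mem_singleton.mp this).symm⟩
  · rintro ⟨j, rfl⟩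
    exact (Polynomial.mem_roots'.mp (hμrs j)).2


/-- High-frequency eigenvalue expansion: for `M_λ = -λD⁻¹ + D⁻¹Γ + N(λ)/λ` with `N` bounded,
the eigenvalues `μ_j(λ)` satisfy `μ_j(λ) = -(λ - γ_j)/d_j + O(1/|λ|)` as `|λ| → ∞`. -/
theorem stmt14 (n : ℕ) (d γ : Fin n → ℝ) (hd : Function.Injective d) (hd0 : ∀ j, d j ≠ 0)
    (R C : ℝ) (N : ℂ → Matrix (Fin n) (Fin n) ℂ)
    (hN : ∀ lam : ℂ, R ≤ ‖lam‖ → ∀ i j, ‖N lam i j‖ ≤ C) :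
    ∃ C' R' : ℝ, 0 < C' ∧ ∀ lam : ℂ, R' ≤ ‖lam‖ →
      ∃ μ : Fin n → ℂ,
        spectrum ℂ ((-lam) • (Matrix.diagonal (fun j => (d j : ℂ)))⁻¹
            + (Matrix.diagonal (fun j => (d j : ℂ)))⁻¹
              * Matrix.diagonal (fun j => (γ j : ℂ))
            + lam⁻¹ • N lam)
          = Set.range μ
        ∧ ∀ j, ‖μ j - (-(lam - (γ j : ℂ)) / (d j : ℂ))‖
            ≤ C' / ‖lam‖ := by
  classical
  rcases Nat.eq_zero_or_pos n with rfl | hn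
  · -- trivial case n = 0
    refine ⟨1, R, one_pos, fun lam _ => ?_⟩
    haveI : Subsingleton (Matrix (Fin 0) (Fin 0) ℂ) :=
      ⟨fun A B => by ext i; exact i.elim0⟩
    refine ⟨fun j => j.elim0, ?_, fun j => j.elim0⟩
    rw [Set.range_eq_empty]
    exact Set.eq_empty_iff_forall_notMem.mpr
      (fun z hz => (spectrum.mem_iff.mp hz) (isUnit_of_subsingleton _))
  haveI : Nonempty (Fin n) := ⟨⟨0, hn⟩⟩
  -- constants
  set C'' : ℝ := max C 0 with hC''_def
  have hC'' : 0 ≤ C'' := le_max_right _ _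
  set a : ℝ := ∑ j, |(d j)⁻¹| with ha_def
  set g : ℝ := ∑ j, |γ j * (d j)⁻¹| with hg_def
  have ha0 : 0 ≤ a := Finset.sum_nonneg fun j _ => abs_nonneg _
  have hg0 : 0 ≤ g := Finset.sum_nonneg fun j _ => abs_nonneg _
  have ha_j : ∀ j, |(d j)⁻¹| ≤ a := by
    intro j; rw [ha_def]
    exact Finset.single_le_sum (f := fun i => |(d i)⁻¹|) (fun i _ => abs_nonneg _) (Finset.mem_univ j)
  have hg_j : ∀ j, |γ j * (d j)⁻¹| ≤ g := by
    intro j; rw [hg_def]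
    exact Finset.single_le_sum (f := fun i => |γ i * (d i)⁻¹|) (fun i _ => abs_nonneg _) (Finset.mem_univ j)
  have hP : (Finset.univ.offDiag (α := Fin n)).Nonempty ∨ n = 1 := by
    rcases Nat.lt_or_ge n 2 with h | h
    · right; omega
    · left
      refine ⟨(⟨0, by omega⟩, ⟨1, by omega⟩), Finset.mem_offDiag.mpr ⟨Finset.mem_univ _, Finset.mem_univ _, ?_⟩⟩
      intro hc
      have := congrArg Fin.val hc
      simp at this
  set δ : ℝ := if hne : (Finset.univ.offDiag (α := Fin n)).Nonempty then
      (Finset.univ.offDiag).inf' hne (fun p => |(d p.1)⁻¹ - (d p.2)⁻¹|) else 1 with hδ_def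
  have hδpos : 0 < δ := by
    rw [hδ_def]
    split_ifs with hne
    · rw [Finset.lt_inf'_iff]
      rintro ⟨j, k⟩ hjk
      obtain ⟨-, -, hne'⟩ := Finset.mem_offDiag.mp hjk
      have : (d j)⁻¹ ≠ (d k)⁻¹ := fun h => hne' (hd (inv_injective h))
      exact abs_pos.mpr (sub_ne_zero.mpr this)
    · exact one_pos
  have hδle : ∀ j k, j ≠ k → δ ≤ |(d j)⁻¹ - (d k)⁻¹| := by
    intro j k hjk
    have hmem : (j, k) ∈ Finset.univ.offDiag :=
      Finset.mem_offDiag.mpr ⟨Finset.mem_univ _, Finset.mem_univ _, hjk⟩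
    rw [hδ_def, dif_pos ⟨(j, k), hmem⟩]
    exact Finset.inf'_le _ hmem
  set B : ℝ := 2 * a + 2 * g + C'' with hB_def
  have hB0 : 0 ≤ B := by positivity
  refine ⟨(n : ℝ) * C'' + 1,
    max R (max 1 (max (4 * g / δ) (max (Real.sqrt (4 * n * C'' / δ) + 1)
      (Real.sqrt ((n.factorial : ℝ) * C'' * B ^ (n - 1) / (δ / 4) ^ n) + 1)))),
    by positivity, ?_⟩
  intro lam hlam
  set m : ℝ := ‖lam‖ with hm_def
  have hmR : R ≤ m := le_trans (le_max_left _ _) hlam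
  have hm1 : 1  ≤ m := le_trans (le_trans (le_max_left _ _) (le_max_right _ _)) hlam
  have hmpos : 0 < m := lt_of_lt_of_le one_pos hm1
  have hm4g : 4 * g / δ ≤ m :=
    le_trans (le_trans (le_trans (le_max_left _ _) (le_max_right _ _)) (le_max_right _ _)) hlam
  have hmsq1 : Real.sqrt (4 * n * C'' / δ) < m :=
    lt_of_lt_of_le (lt_add_of_pos_right _ one_pos)
      (le_trans (le_trans (le_trans (le_max_left _ _) (le_max_right _ _)) (le_trans (le_max_right _ _) (le_max_right _ _))) hlam)
  have hmsq2 : Real.sqrt ((n.factorial : ℝ) * C'' * B ^ (n - 1) / (δ / 4) ^ n) < m :=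
    lt_of_lt_of_le (lt_add_of_pos_right _ one_pos)
      (le_trans (le_trans (le_trans (le_max_right _ _) (le_max_right _ _)) (le_trans (le_max_right _ _) (le_max_right _ _))) hlam)
  have hlam0 : lam ≠ 0 := by
    intro h
    have hm0 : m = 0 := by rw [hm_def, h]; simp
    linarith
  have hsq : ∀ x : ℝ, 0 ≤ x → Real.sqrt x < m → x < m ^ 2 := by
    intro x hx h
    nlinarith [Real.sq_sqrt hx, Real.sqrt_nonneg x]
  have htri : ∀ x y : ℂ, ‖x‖ - ‖y‖ ≤ ‖x + y‖ := by
    intro x y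
    have h := norm_add_le (x + y) (-y)
    simp only [add_neg_cancel_right, norm_neg] at h
    linarith
  have htri2 : ∀ u v : ℂ, ‖u - v‖ ≤ ‖u‖ + ‖v‖ := by
    intro u v
    simpa [sub_eq_add_neg] using norm_add_le u (-v)
  set c : Fin n → ℂ := fun j => -(lam - (γ j : ℂ)) / (d j : ℂ) with hc_def
  have hdC : ∀ j, ((d j : ℝ) : ℂ) ≠ 0 := fun j => Complex.ofReal_ne_zero.mpr (hd0 j)
  have habs_dinv : ∀ j, ‖(((d j : ℝ) : ℂ))⁻¹‖ = |(d j)⁻¹| := by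
    intro j
    rw [← Complex.ofReal_inv, Complex.norm_real, Real.norm_eq_abs]
  have hc_bound : ∀ j, ‖c j‖ ≤ a * m + g := by
    intro j
    have h1 : ‖c j‖ = ‖lam - (γ j : ℂ)‖ * |(d j)⁻¹| := by
      rw [hc_def]
      simp only []
      rw [div_eq_mul_inv, norm_mul, norm_neg, habs_dinv]
    have h2 : ‖lam - (γ j : ℂ)‖ ≤ m + |γ j| := by
      have := norm_add_le lam (-(γ j : ℂ))
      simp only [norm_neg, Complex.norm_real, Real.norm_eq_abs] at this
      simpa [sub_eq_add_neg] using this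
    rw [h1]
    calc ‖lam - (γ j : ℂ)‖ * |(d j)⁻¹|
        ≤ (m + |γ j|) * |(d j)⁻¹| := mul_le_mul_of_nonneg_right h2 (abs_nonneg _)
      _ = m * |(d j)⁻¹| + |γ j * (d j)⁻¹| := by rw [add_mul, abs_mul]
      _ ≤ m * a + g := add_le_add (mul_le_mul_of_nonneg_left (ha_j j) (le_of_lt hmpos)) (hg_j j)
      _ = a * m + g := by ring
  have hN' : ∀ i j, ‖N lam i j‖ ≤ C'' :=
    fun i j => le_trans (hN lam hmR i j) (le_max_left _ _)
  have hpert : ∀ k l, ‖lam⁻¹ * N lam k l‖ ≤ C'' / m := by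
    intro k l
    rw [norm_mul, norm_inv, ← hm_def, div_eq_inv_mul]
    exact mul_le_mul_of_nonneg_left (hN' k l) (inv_nonneg.mpr (le_of_lt hmpos))
  have hDinv : (Matrix.diagonal (fun j => ((d j : ℝ) : ℂ)))⁻¹
      = Matrix.diagonal (fun j => (((d j : ℝ) : ℂ))⁻¹) := by
    apply Matrix.inv_eq_right_inv
    rw [Matrix.diagonal_mul_diagonal,
      show (fun j => ((d j : ℝ) : ℂ) * (((d j : ℝ) : ℂ))⁻¹) = fun _ => (1 : ℂ) from
        funext fun j => mul_inv_cancel₀ (hdC j), Matrix.diagonal_one]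
  set X : Matrix (Fin n) (Fin n) ℂ :=
    (-lam) • (Matrix.diagonal (fun j => ((d j : ℝ) : ℂ)))⁻¹
      + (Matrix.diagonal (fun j => ((d j : ℝ) : ℂ)))⁻¹
        * Matrix.diagonal (fun j => ((γ j : ℝ) : ℂ))
      + lam⁻¹ • N lam with hX_def
  have hXdiag : ∀ k, X k k = c k + lam⁻¹ * N lam k k := by
    intro k
    rw [hX_def, hDinv]
    simp only [Matrix.add_apply, Matrix.smul_apply, Matrix.diagonal_mul_diagonal,
      Matrix.diagonal_apply_eq, smul_eq_mul, hc_def]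
    field_simp
    ring
  have hXoff : ∀ k l, k ≠ l → X k l = lam⁻¹ * N lam k l := by
    intro k l hkl
    rw [hX_def, hDinv]
    simp only [Matrix.add_apply, Matrix.smul_apply, Matrix.diagonal_mul_diagonal,
      Matrix.diagonal_apply_ne _ hkl, smul_eq_mul, mul_zero, zero_add, add_zero]
  have hsepm : ∀ j k, j ≠ k → δ * m / 2 ≤ ‖c j - c k‖ := by
    intro j k hjk
    have hid : c j - c k
        = lam * ((((d k)⁻¹ - (d j)⁻¹ : ℝ)) : ℂ)
          + (((γ j * (d j)⁻¹ - γ k * (d k)⁻¹ : ℝ)) : ℂ) := by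
      rw [hc_def]
      push_cast
      field_simp
      ring
    have h1 : ‖lam * ((((d k)⁻¹ - (d j)⁻¹ : ℝ)) : ℂ)‖
        = m * |(d k)⁻¹ - (d j)⁻¹| := by
      rw [norm_mul, Complex.norm_real, Real.norm_eq_abs, ← hm_def]
    have h2 : ‖(((γ j * (d j)⁻¹ - γ k * (d k)⁻¹ : ℝ)) : ℂ)‖ ≤ 2 * g := by
      rw [Complex.norm_real, Real.norm_eq_abs]
      have := abs_sub (γ j * (d j)⁻¹) (γ k * (d k)⁻¹)
      have t1 := hg_j j
      have t2 := hg_j k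
      linarith [abs_sub_abs_le_abs_sub (γ j * (d j)⁻¹) (γ k * (d k)⁻¹),
        abs_sub (γ j * (d j)⁻¹) (γ k * (d k)⁻¹)]
    have h3 : δ ≤ |(d k)⁻¹ - (d j)⁻¹| := hδle k j (Ne.symm hjk)
    have h4 := htri (lam * ((((d k)⁻¹ - (d j)⁻¹ : ℝ)) : ℂ))
      ((((γ j * (d j)⁻¹ - γ k * (d k)⁻¹ : ℝ)) : ℂ))
    rw [← hid, h1] at h4
    have h5 : 4 * g ≤ m * δ := by
      have := (div_le_iff₀ hδpos).mp hm4g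
      linarith
    nlinarith
  -- numeric bounds
  have hgapm : (n : ℝ) * (C'' / m) < (δ * m / 2) / 2 := by
    have h1 : 4 * (n : ℝ) * C'' / δ < m ^ 2 := hsq _ (by positivity) hmsq1
    have h2 : 4 * (n : ℝ) * C'' < δ * m ^ 2 := by
      have := (div_lt_iff₀ hδpos).mp h1
      linarith
    have h3 : (4:ℝ) * n * C'' < δ * (m * m) := by rw [← pow_two]; exact h2
    rw [show (n:ℝ) * (C'' / m) = (n * C'') / m by ring, div_lt_iff₀ hmpos]
    nlinarith [h3]
  have hdetm : (n.factorial : ℝ) * ((C'' / m) * (B * m) ^ (n - 1)) < ((δ * m / 2) / 2) ^ n := by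
    have hKnn : 0 ≤ (n.factorial : ℝ) * C'' * B ^ (n - 1) := by positivity
    have h1 : (n.factorial : ℝ) * C'' * B ^ (n - 1) / (δ / 4) ^ n < m ^ 2 :=
      hsq _ (by positivity) hmsq2
    have h2 : (n.factorial : ℝ) * C'' * B ^ (n - 1) < (δ / 4) ^ n * m ^ 2 := by
      have := (div_lt_iff₀ (by positivity : (0:ℝ) < (δ / 4) ^ n)).mp h1
      linarith
    have hpow : m ^ n = m ^ (n - 1) * m := by
      conv_lhs => rw [show n = (n - 1) + 1 by omega]
      rw [pow_succ]
    have hLHS : (n.factorial : ℝ) * ((C'' / m) * (B * m) ^ (n - 1))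
        = ((n.factorial : ℝ) * C'' * B ^ (n - 1)) * m ^ (n - 1) / m := by
      rw [mul_pow]; field_simp
    have hRHS : ((δ * m / 2) / 2) ^ n = (δ / 4) ^ n * (m ^ (n - 1) * m) := by
      rw [show δ * m / 2 / 2 = δ / 4 * m by ring, mul_pow, ← hpow]
    rw [hLHS, hRHS, div_lt_iff₀ hmpos]
    calc ((n.factorial : ℝ) * C'' * B ^ (n - 1)) * m ^ (n - 1)
        < ((δ / 4) ^ n * m ^ 2) * m ^ (n - 1) :=
          mul_lt_mul_of_pos_right h2 (pow_pos hmpos _)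
      _ = (δ / 4) ^ n * (m ^ (n - 1) * m) * m := by ring
  obtain ⟨μ, hspec, hb⟩ := keyLemma hn c X (C'' / m) (δ * m / 2) (B * m)
    (by positivity)
    (le_trans (div_le_self hC'' hm1)
      (le_trans (by rw [hB_def]; linarith) (le_mul_of_one_le_right hB0 hm1)))
    hsepm
    (fun j => by rw [hXdiag j, add_sub_cancel_left]; exact hpert j j)
    (fun j k hjk => by rw [hXoff j k hjk]; exact hpert j k)
    (fun j k => by
      rw [hXdiag k]
      calc ‖c j - (c k + lam⁻¹ * N lam k k)‖
          ≤ ‖c j‖ + ‖c k + lam⁻¹ * N lam k k‖ := htri2 _ _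
        _ ≤ ‖c j‖ + (‖c k‖ + ‖lam⁻¹ * N lam k k‖) := by
            linarith [norm_add_le (c k) (lam⁻¹ * N lam k k)]
        _ ≤ (a * m + g) + ((a * m + g) + C'' / m) := by
            linarith [hc_bound j, hc_bound k, hpert k k]
        _ ≤ B * m := by
            have hgm : g ≤ g * m := le_mul_of_one_le_right hg0 hm1
            have hCm : C'' / m ≤ C'' * m :=
              le_trans (div_le_self hC'' hm1) (le_mul_of_one_le_right hC'' hm1)
            rw [hB_def]; nlinarith)
    hgapm hdetm
  refine ⟨μ, hspec, fun j => ?_⟩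
  calc ‖μ j - (-(lam - (γ j : ℂ)) / (d j : ℂ))‖ ≤ (n : ℝ) * (C'' / m) := hb j
    _ = ((n : ℝ) * C'') / m := by ring
    _ ≤ ((n : ℝ) * C'' + 1) / m := by gcongr; linarith
end

section
/- Assume the eigenvalues of -A∂_x + G (constant coefficient operator on L²(ℝ;ℂⁿ) with domain H¹) all satisfy Re λ < -α_0, where A is real diagonalizable with distinct real nonzero eigenvalues d_1,...,d_n via P A P⁻¹ = D. Then each diagonal entry γ_j of the diagonal part of PGP⁻¹ satisfies γ_j ≤ -α_0. -/
/-!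
Conjugating by `P` turns the symbol into `B - iξD` with `B = PGP⁻¹`, and the shift by `iξ d_j`
does not change real parts. Multiplying every row except the `j`-th by `t = 1/ξ` turns
`det (w - iξ d_j - (B - iξD))` into a determinant `F_w(t)` that is continuous up to `t = 0`, where
`F_w(0) = (w - B_jj) ∏_{k ≠ j} i(d_k - d_j)`. If `Re B_jj - α = ε > 0`, every eigenvalue `a` of the
symbol has `Re (B_jj - iξ d_j - a) > ε`, so `|F_{B_jj}(t)| ≥ (ε/(1+ε))^n |F_{B_jj+1}(t)|` for
`t > 0`. At `t = 0` the left side vanishes and the right side does not.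
-/

open Matrix Complex Finset

variable {ι : Type*} [Fintype ι] [DecidableEq ι]

theorem Matrix.det_updateRow_diagonal {R : Type*} [CommRing R] (v r : ι → R) (j : ι) :
    (updateRow (diagonal v) j r).det = r j * ∏ k ∈ univ.erase j, v k := by
  rw [det_apply', sum_eq_single 1, ← mul_prod_erase univ _ (mem_univ j)]
  · simp only [Equiv.Perm.sign_one, Units.val_one, Int.cast_one, one_mul, Equiv.Perm.one_apply,
      updateRow_self]
    congr 1
    exact prod_congr rfl fun k hk => by simp [updateRow_ne (ne_of_mem_erase hk)]
  · intro σ _ hσ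
    obtain ⟨i, hi⟩ : ∃ i, σ i ≠ i := by
      by_contra! h
      exact hσ (Equiv.ext h)
    obtain ⟨k, hk, hkj⟩ : ∃ k, σ k ≠ k ∧ σ k ≠ j := by
      by_cases h : σ i = j
      · have hj : σ j ≠ j := fun hj => hi (by rw [h, σ.injective (h.trans hj.symm)])
        exact ⟨j, hj, hj⟩
      · exact ⟨i, hi, h⟩
    rw [prod_eq_zero (mem_univ k) (by simp [hk, hkj]), mul_zero]
  · simp

theorem pow_card_mul_norm_det_scalar_sub_le (N : Matrix ι ι ℂ) {z w : ℂ} {c : ℝ} (hc : 0 ≤ c)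
    (h : ∀ a ∈ spectrum ℂ N, c * ‖w - a‖ ≤ ‖z - a‖) :
    c ^ Fintype.card ι * ‖(scalar ι w - N).det‖ ≤ ‖(scalar ι z - N).det‖ := by
  have hsplit := IsAlgClosed.splits N.charpoly
  have hnorm (s : Multiset ℂ) : ‖s.prod‖ = (s.map (‖·‖)).prod := map_multiset_prod normHom s
  simp only [← eval_charpoly, hsplit.eval_eq_prod_roots_of_monic N.charpoly_monic, hnorm,
    Multiset.map_map]
  rw [← N.charpoly_natDegree_eq_dim, hsplit.natDegree_eq_card_roots, ← Multiset.prod_replicate,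
    ← Multiset.map_const', ← Multiset.prod_map_mul]
  refine Multiset.prod_map_le_prod_map₀ _ _ (fun _ _ => by simp only [Function.comp]; positivity)
    fun a ha => h a (mem_spectrum_iff_isRoot_charpoly.mpr (Polynomial.isRoot_of_mem_roots ha))

theorem div_one_add_mul_norm_add_one_le {ε : ℝ} (hε : 0 < ε) {u : ℂ} (hu : ε ≤ u.re) :
    ε / (1 + ε) * ‖u + 1‖ ≤ ‖u‖ := by
  have hεu : ε ≤ ‖u‖ := hu.trans (re_le_norm u)
  rw [div_mul_eq_mul_div, div_le_iff₀ (by positivity)]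
  nlinarith [norm_add_le u 1, norm_one (α := ℂ)]

noncomputable def rescaledCharDet (B : Matrix ι ι ℂ) (d : ι → ℝ) (j : ι) (w : ℂ) (t : ℝ) : ℂ :=
  (diagonal (Function.update (fun _ => (t : ℂ)) j 1) * (scalar ι w - B) +
    diagonal fun k => I * (d k - d j)).det

section rescaledCharDet

variable (B : Matrix ι ι ℂ) (d : ι → ℝ) (j : ι) (w : ℂ)

theorem continuous_rescaledCharDet : Continuous (rescaledCharDet B d j w) := by
  unfold rescaledCharDet
  fun_prop

theorem rescaledCharDet_zero :
    rescaledCharDet B d j w 0 = (w - B j j) * ∏ k ∈ univ.erase j, I * (d k - d j) := by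
  have hrow : diagonal (Function.update (fun _ => ((0 : ℝ) : ℂ)) j 1) * (scalar ι w - B) +
      (diagonal fun k => I * (d k - d j)) =
      updateRow (diagonal fun k => I * (d k - d j)) j ((scalar ι w - B) j) := by
    ext k l
    by_cases hk : k = j
    · subst hk
      simp [diagonal_apply]
    · simp [hk, diagonal_apply]
  rw [rescaledCharDet, hrow, det_updateRow_diagonal]
  simp

theorem rescaledCharDet_eq {t : ℝ} (ht : t ≠ 0) :
    rescaledCharDet B d j w t = t ^ (Fintype.card ι - 1) *
      (scalar ι (w - I * t⁻¹ * d j) - (B - (I * t⁻¹) • diagonal fun k => (d k : ℂ))).det := by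
  have hmul : diagonal (Function.update (fun _ => (t : ℂ)) j 1) *
      (scalar ι (w - I * t⁻¹ * d j) - (B - (I * t⁻¹) • diagonal fun k => (d k : ℂ))) =
      diagonal (Function.update (fun _ => (t : ℂ)) j 1) * (scalar ι w - B) +
        diagonal fun k => I * (d k - d j) := by
    ext k l
    by_cases hk : k = j
    · subst hk
      by_cases hl : k = l
      · subst hl; simp
      · simp [hl]
    · by_cases hl : k = l
      · subst hl
        have htc : (t : ℂ) ≠ 0 := by exact_mod_cast ht
        simp only [diagonal_mul, Function.update_of_ne hk, Matrix.add_apply, Matrix.sub_apply,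
          scalar_apply, diagonal_apply_eq, Matrix.smul_apply, smul_eq_mul, ofReal_inv]
        linear_combination (I * d k - I * d j) * mul_inv_cancel₀ htc
      · simp [hk, hl]
  rw [rescaledCharDet, ← hmul, det_mul, det_diagonal, prod_update_of_mem (mem_univ j),
    prod_const, ← erase_eq, card_erase_of_mem (mem_univ j), card_univ, one_mul]

end rescaledCharDet

theorem re_diag_le_of_forall_spectrum_re_lt (B : Matrix ι ι ℂ) {d : ι → ℝ}
    (hd : Function.Injective d) {α : ℝ}
    (h : ∀ ξ : ℝ, ∀ a ∈ spectrum ℂ (B - (I * ξ) • diagonal fun k => (d k : ℂ)), a.re < α)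
    (j : ι) : (B j j).re ≤ α := by
  by_contra! hα
  set ε := (B j j).re - α
  have hε : 0 < ε := sub_pos.2 hα
  set c := ε / (1 + ε)
  have hcomp : ∀ t > 0, c ^ Fintype.card ι * ‖rescaledCharDet B d j (B j j + 1) t‖ ≤
      ‖rescaledCharDet B d j (B j j) t‖ := by
    intro t ht
    rw [rescaledCharDet_eq _ _ _ _ ht.ne', rescaledCharDet_eq _ _ _ _ ht.ne', norm_mul, norm_mul,
      mul_left_comm]
    refine mul_le_mul_of_nonneg_left (pow_card_mul_norm_det_scalar_sub_le _ (by positivity) fun a ha => ?_)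
      (norm_nonneg _)
    have hre : ε ≤ (B j j - I * t⁻¹ * d j - a).re := by
      have hshift : (I * ((t⁻¹ : ℝ) : ℂ) * d j).re = 0 := by simp
      have := h t⁻¹ a ha
      rw [sub_re, sub_re, hshift]
      linarith
    convert div_one_add_mul_norm_add_one_le hε hre using 3
    ring
  have hlim : c ^ Fintype.card ι * ‖rescaledCharDet B d j (B j j + 1) 0‖ ≤
      ‖rescaledCharDet B d j (B j j) 0‖ := by
    refine ContinuousWithinAt.closure_le (s := Set.Ioi 0) (by simp) ?_ ?_ hcomp
    · exact ((continuous_rescaledCharDet _ _ _ _).norm.const_mul _).continuousWithinAt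
    · exact (continuous_rescaledCharDet _ _ _ _).norm.continuousWithinAt
  have hL : ∏ k ∈ univ.erase j, I * (d k - d j) ≠ 0 :=
    prod_ne_zero_iff.2 fun k hk => mul_ne_zero I_ne_zero
      (sub_ne_zero.2 (by exact_mod_cast hd.ne (ne_of_mem_erase hk)))
  rw [rescaledCharDet_zero, rescaledCharDet_zero, add_sub_cancel_left, sub_self, one_mul,
    zero_mul, norm_zero] at hlim
  exact (mul_pos (by positivity) (norm_pos_iff.2 hL)).not_ge hlim

theorem spectrum_symbol_eq {A G P : Matrix ι ι ℝ} {d : ι → ℝ} (hP : IsUnit P.det)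
    (hA : A = P⁻¹ * diagonal d * P) (ξ : ℝ) :
    spectrum ℂ ((-(I * ξ)) • A.map ofReal + G.map ofReal) =
      spectrum ℂ ((P * G * P⁻¹).map ofReal - (I * ξ) • diagonal fun k => (d k : ℂ)) := by
  let u := Units.map (ofRealHom.mapMatrix : Matrix ι ι ℝ →+* Matrix ι ι ℂ).toMonoidHom
    (P.nonsingInvUnit hP)
  have hu : (u : Matrix ι ι ℂ) = P.map ofReal := rfl
  have hu' : ((u⁻¹ : (Matrix ι ι ℂ)ˣ) : Matrix ι ι ℂ) = P⁻¹.map ofReal := rfl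
  rw [← spectrum.units_conjugate (u := u), hu, hu', hA]
  congr 1
  have hmap (M N : Matrix ι ι ℝ) : (M * N).map ofReal = M.map ofReal * N.map ofReal :=
    Matrix.map_mul (f := ofRealHom)
  have h1 : P.map ofReal * P⁻¹.map ofReal = 1 := by
    rw [← hmap, mul_nonsing_inv P hP, Matrix.map_one _ ofReal_zero ofReal_one]
  rw [hmap, hmap, hmap, hmap, diagonal_map ofReal_zero]
  simp only [mul_add, add_mul, mul_smul_comm, smul_mul_assoc, ← mul_assoc, h1, one_mul]
  simp only [mul_assoc, h1, mul_one]
  rw [neg_smul, sub_eq_add_neg, add_comm]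

theorem stmt15_general (n : ℕ) (α₀ : ℝ)
    (A G P : Matrix (Fin n) (Fin n) ℝ) (d : Fin n → ℝ)
    (hd : Function.Injective d)
    (hP : IsUnit P.det) (hA : A = P⁻¹ * Matrix.diagonal d * P)
    (hspec : ∀ ξ : ℝ, ∀ lam ∈ spectrum ℂ
        ((-(Complex.I * ξ)) • A.map Complex.ofReal + G.map Complex.ofReal),
      lam.re < -α₀) :
    ∀ j, (P * G * P⁻¹) j j ≤ -α₀ := by
  intro j
  simpa using re_diag_le_of_forall_spectrum_re_lt ((P * G * P⁻¹).map ofReal) hd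
    (fun ξ => spectrum_symbol_eq hP hA ξ ▸ hspec ξ) j

/-- If all spectral points of `-A∂ₓ + G` (equivalently, all eigenvalues of the Fourier symbols
`-iξA + G`, `ξ ∈ ℝ`) have real part `< -α₀`, with `A = P⁻¹DP`, `D = diagonal d` having distinct
nonzero real entries, then each diagonal entry of `PGP⁻¹` is `≤ -α₀`. -/
theorem stmt15 (n : ℕ) (α₀ : ℝ) (hα₀ : 0 < α₀)
    (A G P : Matrix (Fin n) (Fin n) ℝ) (d : Fin n → ℝ)
    (hd : Function.Injective d) (hd0 : ∀ j, d j ≠ 0)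
    (hP : IsUnit P.det) (hA : A = P⁻¹ * Matrix.diagonal d * P)
    (hspec : ∀ ξ : ℝ, ∀ lam ∈ spectrum ℂ
        ((-(Complex.I * ξ)) • A.map Complex.ofReal + G.map Complex.ofReal),
      lam.re < -α₀) :
    ∀ j, (P * G * P⁻¹) j j ≤ -α₀ :=
  stmt15_general n α₀ A G P d hd hP hA hspec
end
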